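/- (Identification theorem.) Suppose Consistency, Unconfoundedness (in both regimes), No Unprecedented Decisions, Stable CATE, and No Feedback hold, and P_post(A = a) > 0. Then P_post(Y = y | A = a) equals the sum over (x, d) in Π_post = {(x, d) : P_post(X = x, D = d | A = a) > 0} of P_pre(Y = y | A = a, X = x, D = d) · P_pre(X = x | A = a) · P_post(D = d | A = a, X = x). -/

import Mathlib

/-!
Split `P_post(Y = y | A = a)` over the values of `(X, D)` and drop the null cells. On a cell of
`Π_post`, consistency and unconfoundedness turn `P(Y = y | a, x, d)` into the potential-outcome
probability `P(Y^d = y | a, x)` in each regime; this needs `P(D = d | a, x) > 0`, which No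
Unprecedented Decisions transfers to the pre-deployment regime. Stable CATE identifies the two
potential-outcome terms, No Feedback identifies `P(X = x | A = a)`, and the chain rule in the
post-deployment regime reassembles `P_post(Y = y, X = x, D = d | A = a)`.
-/

open scoped Classical
open Finset

/-- Probability of an event under a finite distribution `p`. -/
noncomputable def Pr {Ω : Type*} [Fintype Ω] (p : Ω → ℝ) (E : Ω → Prop) : ℝ :=
  ∑ ω, if E ω then p ω else 0

/-- Conditional probability `P(E | F)` as a ratio of probabilities. -/
noncomputable def cPr {Ω : Type*} [Fintype Ω] (p : Ω → ℝ) (E F : Ω → Prop) : ℝ :=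
  Pr p (fun ω => E ω ∧ F ω) / Pr p F

section ConditionalProbability

variable {Ω : Type*} [Fintype Ω] {p : Ω → ℝ}

lemma Pr_congr {E F : Ω → Prop} (h : ∀ ω, E ω ↔ F ω) : Pr p E = Pr p F :=
  sum_congr rfl fun ω _ => by rw [h ω]

lemma Pr_nonneg (hp : ∀ ω, 0 ≤ p ω) (E : Ω → Prop) : 0 ≤ Pr p E :=
  sum_nonneg fun ω _ => ite_nonneg (hp ω) le_rfl

lemma Pr_mono (hp : ∀ ω, 0 ≤ p ω) {E F : Ω → Prop} (h : ∀ ω, E ω → F ω) :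
    Pr p E ≤ Pr p F :=
  sum_le_sum fun ω _ => by
    split_ifs with hE hF
    exacts [le_rfl, absurd (h ω hE) hF, hp ω, le_rfl]

lemma Pr_eq_sum_fiber {T : Type*} [Fintype T] (f : Ω → T) (E : Ω → Prop) :
    Pr p E = ∑ t, Pr p (fun ω => E ω ∧ f ω = t) := by
  unfold Pr
  rw [sum_comm]
  refine sum_congr rfl fun ω _ => ?_
  by_cases hE : E ω <;> simp [hE]

lemma cPr_congr {E E' F F' : Ω → Prop} (hF : ∀ ω, F ω ↔ F' ω)
    (hE : ∀ ω, F ω → (E ω ↔ E' ω)) : cPr p E F = cPr p E' F' := by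
  unfold cPr
  rw [Pr_congr hF]
  congr 1
  exact Pr_congr fun ω => ⟨fun h => ⟨(hE ω h.2).1 h.1, (hF ω).1 h.2⟩,
    fun h => ⟨(hE ω ((hF ω).2 h.2)).2 h.1, (hF ω).2 h.2⟩⟩

lemma Pr_pos_of_cPr_pos (hp : ∀ ω, 0 ≤ p ω) {E C : Ω → Prop} (h : 0 < cPr p E C) :
    0 < Pr p (fun ω => E ω ∧ C ω) :=
  (Pr_nonneg hp _).lt_of_ne (div_ne_zero_iff.mp h.ne').1.symm

lemma cPr_pos_of_imp (hp : ∀ ω, 0 ≤ p ω) {E F C : Ω → Prop} (h : ∀ ω, E ω → F ω)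
    (hE : cPr p E C ≠ 0) : 0 < cPr p F C := by
  obtain ⟨hEC, hC⟩ := div_ne_zero_iff.mp hE
  exact div_pos ((Pr_nonneg hp _).lt_of_ne hEC.symm |>.trans_le
    (Pr_mono hp fun ω h' => ⟨h ω h'.1, h'.2⟩)) ((Pr_nonneg hp _).lt_of_ne hC.symm)

lemma cPr_eq_sum_fiber {T : Type*} [Fintype T] (f : Ω → T) (E C : Ω → Prop) :
    cPr p E C = ∑ t, cPr p (fun ω => E ω ∧ f ω = t) C := by
  simp only [cPr]
  rw [← sum_div, Pr_eq_sum_fiber f]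
  congr 1
  exact sum_congr rfl fun t _ => Pr_congr fun ω => and_right_comm

lemma cPr_and_eq_mul {E F C : Ω → Prop} (hCF : Pr p (fun ω => C ω ∧ F ω) ≠ 0) :
    cPr p (fun ω => E ω ∧ F ω) C = cPr p E (fun ω => C ω ∧ F ω) * cPr p F C := by
  simp only [cPr]
  rw [Pr_congr (p := p) (F := fun ω => E ω ∧ C ω ∧ F ω) fun ω => by tauto,
    Pr_congr (p := p) (E := fun ω => F ω ∧ C ω) fun ω => and_comm]
  field_simp

lemma cPr_and_cond_of_indep {E F C : Ω → Prop}
    (hind : cPr p (fun ω => E ω ∧ F ω) C = cPr p E C * cPr p F C) (hF : cPr p F C ≠ 0) :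
    cPr p E (fun ω => F ω ∧ C ω) = cPr p E C := by
  obtain ⟨hFC, hC⟩ := div_ne_zero_iff.mp hF
  simp only [cPr] at hind ⊢
  rw [Pr_congr (E := fun ω => E ω ∧ F ω ∧ C ω) fun ω => and_assoc.symm]
  field_simp at hind ⊢
  linear_combination hind

lemma cPr_eq_of_joint_eq {Ω' T : Type*} [Fintype Ω'] [Fintype T] {q : Ω' → ℝ}
    {C : Ω → Prop} {C' : Ω' → Prop} {f : Ω → T} {g : Ω' → T}
    (h : ∀ t, Pr p (fun ω => C ω ∧ f ω = t) = Pr q (fun ω => C' ω ∧ g ω = t)) (t : T) :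
    cPr p (fun ω => f ω = t) C = cPr q (fun ω => g ω = t) C' := by
  simp only [cPr]
  rw [Pr_eq_sum_fiber f C, Pr_eq_sum_fiber g C', Pr_congr fun ω => and_comm,
    Pr_congr (p := q) fun ω => and_comm, h, sum_congr rfl fun t _ => h t]

end ConditionalProbability

section PotentialOutcomes

variable {Ω 𝒜 𝒳 𝒟 𝒴 : Type*} [Fintype Ω] {p : Ω → ℝ}
  {A : Ω → 𝒜} {X : Ω → 𝒳} {D : Ω → 𝒟} {Y : Ω → 𝒴} {Yd : 𝒟 → Ω → 𝒴}

lemma cPr_outcome_eq_cPr_potential (hcons : ∀ ω, Y ω = Yd (D ω) ω)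
    {a : 𝒜} {x : 𝒳} {d : 𝒟} {y : 𝒴}
    (hunc : cPr p (fun ω => Yd d ω = y ∧ D ω = d) (fun ω => A ω = a ∧ X ω = x)
      = cPr p (fun ω => Yd d ω = y) (fun ω => A ω = a ∧ X ω = x)
        * cPr p (fun ω => D ω = d) (fun ω => A ω = a ∧ X ω = x))
    (hD : cPr p (fun ω => D ω = d) (fun ω => A ω = a ∧ X ω = x) ≠ 0) :
    cPr p (fun ω => Y ω = y) (fun ω => A ω = a ∧ X ω = x ∧ D ω = d)
      = cPr p (fun ω => Yd d ω = y) (fun ω => A ω = a ∧ X ω = x) := by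
  rw [← cPr_and_cond_of_indep hunc hD]
  exact cPr_congr (fun ω => by tauto) fun ω h => by rw [hcons ω, h.2.2]

end PotentialOutcomes

theorem identification_general
    {Ω₁ Ω₂ 𝒜 𝒳 𝒟 𝒴 : Type*} [Fintype Ω₁] [Fintype Ω₂] [Fintype 𝒳] [Fintype 𝒟]
    (ppre : Ω₁ → ℝ) (ppost : Ω₂ → ℝ)
    (A₁ : Ω₁ → 𝒜) (X₁ : Ω₁ → 𝒳) (D₁ : Ω₁ → 𝒟) (Y₁ : Ω₁ → 𝒴) (Yd₁ : 𝒟 → Ω₁ → 𝒴)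
    (A₂ : Ω₂ → 𝒜) (X₂ : Ω₂ → 𝒳) (D₂ : Ω₂ → 𝒟) (Y₂ : Ω₂ → 𝒴) (Yd₂ : 𝒟 → Ω₂ → 𝒴)
    (hpost0 : ∀ ω, 0 ≤ ppost ω)
    (hcons₁ : ∀ ω, Y₁ ω = Yd₁ (D₁ ω) ω) (hcons₂ : ∀ ω, Y₂ ω = Yd₂ (D₂ ω) ω)
    (hunc₁ : ∀ (d : 𝒟) (y : 𝒴) (a : 𝒜) (x : 𝒳),
      0 < Pr ppre (fun ω => A₁ ω = a ∧ X₁ ω = x) →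
      cPr ppre (fun ω => Yd₁ d ω = y ∧ D₁ ω = d) (fun ω => A₁ ω = a ∧ X₁ ω = x)
        = cPr ppre (fun ω => Yd₁ d ω = y) (fun ω => A₁ ω = a ∧ X₁ ω = x)
          * cPr ppre (fun ω => D₁ ω = d) (fun ω => A₁ ω = a ∧ X₁ ω = x))
    (hunc₂ : ∀ (d : 𝒟) (y : 𝒴) (a : 𝒜) (x : 𝒳),
      0 < Pr ppost (fun ω => A₂ ω = a ∧ X₂ ω = x) →
      cPr ppost (fun ω => Yd₂ d ω = y ∧ D₂ ω = d) (fun ω => A₂ ω = a ∧ X₂ ω = x)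
        = cPr ppost (fun ω => Yd₂ d ω = y) (fun ω => A₂ ω = a ∧ X₂ ω = x)
          * cPr ppost (fun ω => D₂ ω = d) (fun ω => A₂ ω = a ∧ X₂ ω = x))
    (hNUD : ∀ (a : 𝒜) (x : 𝒳) (d : 𝒟),
      0 < cPr ppost (fun ω => D₂ ω = d) (fun ω => A₂ ω = a ∧ X₂ ω = x) →
      0 < cPr ppre (fun ω => D₁ ω = d) (fun ω => A₁ ω = a ∧ X₁ ω = x))
    (hCATE : ∀ (d : 𝒟) (y : 𝒴) (a : 𝒜) (x : 𝒳),
      cPr ppre (fun ω => Yd₁ d ω = y) (fun ω => A₁ ω = a ∧ X₁ ω = x)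
        = cPr ppost (fun ω => Yd₂ d ω = y) (fun ω => A₂ ω = a ∧ X₂ ω = x))
    (hNF : ∀ (a : 𝒜) (x : 𝒳),
      Pr ppre (fun ω => A₁ ω = a ∧ X₁ ω = x) = Pr ppost (fun ω => A₂ ω = a ∧ X₂ ω = x))
    (a : 𝒜) (y : 𝒴) :
    cPr ppost (fun ω => Y₂ ω = y) (fun ω => A₂ ω = a)
      = ∑ xd ∈ Finset.univ.filter
          (fun xd : 𝒳 × 𝒟 =>
            0 < cPr ppost (fun ω => X₂ ω = xd.1 ∧ D₂ ω = xd.2) (fun ω => A₂ ω = a)),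
          cPr ppre (fun ω => Y₁ ω = y)
              (fun ω => A₁ ω = a ∧ X₁ ω = xd.1 ∧ D₁ ω = xd.2)
            * cPr ppre (fun ω => X₁ ω = xd.1) (fun ω => A₁ ω = a)
            * cPr ppost (fun ω => D₂ ω = xd.2) (fun ω => A₂ ω = a ∧ X₂ ω = xd.1) := by
  rw [cPr_eq_sum_fiber (fun ω => (X₂ ω, D₂ ω)), ← sum_filter_of_ne fun xd _ hxd =>
    cPr_pos_of_imp hpost0 (fun ω h => Prod.ext_iff.mp h.2) hxd]
  refine sum_congr rfl fun ⟨x, d⟩ hxd => ?_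
  have hXDA := Pr_pos_of_cPr_pos hpost0 (mem_filter.mp hxd).2
  have hAX : 0 < Pr ppost (fun ω => A₂ ω = a ∧ X₂ ω = x) :=
    hXDA.trans_le (Pr_mono hpost0 fun ω h => ⟨h.2, h.1.1⟩)
  have hD₂ : 0 < cPr ppost (fun ω => D₂ ω = d) (fun ω => A₂ ω = a ∧ X₂ ω = x) :=
    div_pos (hXDA.trans_le (Pr_mono hpost0 fun ω h => ⟨h.1.2, h.2, h.1.1⟩)) hAX
  have hY : cPr ppre (fun ω => Y₁ ω = y) (fun ω => A₁ ω = a ∧ X₁ ω = x ∧ D₁ ω = d)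
      = cPr ppost (fun ω => Y₂ ω = y) (fun ω => A₂ ω = a ∧ X₂ ω = x ∧ D₂ ω = d) := by
    rw [cPr_outcome_eq_cPr_potential hcons₁ (hunc₁ d y a x (hNF a x ▸ hAX)) (hNUD a x d hD₂).ne',
      hCATE, cPr_outcome_eq_cPr_potential hcons₂ (hunc₂ d y a x hAX) hD₂.ne']
  have hXD : cPr ppost (fun ω => X₂ ω = x ∧ D₂ ω = d) (fun ω => A₂ ω = a)
      = cPr ppost (fun ω => D₂ ω = d) (fun ω => A₂ ω = a ∧ X₂ ω = x)
        * cPr ppost (fun ω => X₂ ω = x) (fun ω => A₂ ω = a) := by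
    rw [← cPr_and_eq_mul hAX.ne']
    exact cPr_congr (fun _ => Iff.rfl) fun _ _ => and_comm
  calc cPr ppost (fun ω => Y₂ ω = y ∧ (X₂ ω, D₂ ω) = (x, d)) (fun ω => A₂ ω = a)
      = cPr ppost (fun ω => Y₂ ω = y ∧ X₂ ω = x ∧ D₂ ω = d) (fun ω => A₂ ω = a) :=
        cPr_congr (fun _ => Iff.rfl) fun _ _ => by rw [Prod.ext_iff]
    _ = _ := by
      rw [cPr_and_eq_mul (hXDA.trans_le (Pr_mono hpost0 fun ω h => ⟨h.2, h.1⟩)).ne', hXD, hY,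
        cPr_eq_of_joint_eq (hNF a)]
      ring

/-- Identification theorem: under Consistency, Unconfoundedness (both regimes),
No Unprecedented Decisions, Stable CATE, No Feedback and `P_post(A = a) > 0`,
`P_post(Y = y | A = a)` equals the sum over the post-deployment support `Π_post` of
`P_pre(Y = y | A = a, X = x, D = d) · P_pre(X = x | A = a) · P_post(D = d | A = a, X = x)`. -/
theorem identification
    {Ω₁ Ω₂ 𝒜 𝒳 𝒟 𝒴 : Type*} [Fintype Ω₁] [Fintype Ω₂] [Fintype 𝒳] [Fintype 𝒟]
    (ppre : Ω₁ → ℝ) (ppost : Ω₂ → ℝ)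
    (A₁ : Ω₁ → 𝒜) (X₁ : Ω₁ → 𝒳) (D₁ : Ω₁ → 𝒟) (Y₁ : Ω₁ → 𝒴) (Yd₁ : 𝒟 → Ω₁ → 𝒴)
    (A₂ : Ω₂ → 𝒜) (X₂ : Ω₂ → 𝒳) (D₂ : Ω₂ → 𝒟) (Y₂ : Ω₂ → 𝒴) (Yd₂ : 𝒟 → Ω₂ → 𝒴)
    (hpre0 : ∀ ω, 0 ≤ ppre ω) (hpost0 : ∀ ω, 0 ≤ ppost ω)
    (hcons₁ : ∀ ω, Y₁ ω = Yd₁ (D₁ ω) ω) (hcons₂ : ∀ ω, Y₂ ω = Yd₂ (D₂ ω) ω)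
    (hunc₁ : ∀ (d : 𝒟) (y : 𝒴) (a : 𝒜) (x : 𝒳),
      0 < Pr ppre (fun ω => A₁ ω = a ∧ X₁ ω = x) →
      cPr ppre (fun ω => Yd₁ d ω = y ∧ D₁ ω = d) (fun ω => A₁ ω = a ∧ X₁ ω = x)
        = cPr ppre (fun ω => Yd₁ d ω = y) (fun ω => A₁ ω = a ∧ X₁ ω = x)
          * cPr ppre (fun ω => D₁ ω = d) (fun ω => A₁ ω = a ∧ X₁ ω = x))
    (hunc₂ : ∀ (d : 𝒟) (y : 𝒴) (a : 𝒜) (x : 𝒳),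
      0 < Pr ppost (fun ω => A₂ ω = a ∧ X₂ ω = x) →
      cPr ppost (fun ω => Yd₂ d ω = y ∧ D₂ ω = d) (fun ω => A₂ ω = a ∧ X₂ ω = x)
        = cPr ppost (fun ω => Yd₂ d ω = y) (fun ω => A₂ ω = a ∧ X₂ ω = x)
          * cPr ppost (fun ω => D₂ ω = d) (fun ω => A₂ ω = a ∧ X₂ ω = x))
    (hNUD : ∀ (a : 𝒜) (x : 𝒳) (d : 𝒟),
      0 < cPr ppost (fun ω => D₂ ω = d) (fun ω => A₂ ω = a ∧ X₂ ω = x) →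
      0 < cPr ppre (fun ω => D₁ ω = d) (fun ω => A₁ ω = a ∧ X₁ ω = x))
    (hCATE : ∀ (d : 𝒟) (y : 𝒴) (a : 𝒜) (x : 𝒳),
      cPr ppre (fun ω => Yd₁ d ω = y) (fun ω => A₁ ω = a ∧ X₁ ω = x)
        = cPr ppost (fun ω => Yd₂ d ω = y) (fun ω => A₂ ω = a ∧ X₂ ω = x))
    (hNF : ∀ (a : 𝒜) (x : 𝒳),
      Pr ppre (fun ω => A₁ ω = a ∧ X₁ ω = x) = Pr ppost (fun ω => A₂ ω = a ∧ X₂ ω = x))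
    (a : 𝒜) (y : 𝒴)
    (ha : 0 < Pr ppost (fun ω => A₂ ω = a)) :
    cPr ppost (fun ω => Y₂ ω = y) (fun ω => A₂ ω = a)
      = ∑ xd ∈ Finset.univ.filter
          (fun xd : 𝒳 × 𝒟 =>
            0 < cPr ppost (fun ω => X₂ ω = xd.1 ∧ D₂ ω = xd.2) (fun ω => A₂ ω = a)),
          cPr ppre (fun ω => Y₁ ω = y)
              (fun ω => A₁ ω = a ∧ X₁ ω = xd.1 ∧ D₁ ω = xd.2)
            * cPr ppre (fun ω => X₁ ω = xd.1) (fun ω => A₁ ω = a)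
            * cPr ppost (fun ω => D₂ ω = xd.2) (fun ω => A₂ ω = a ∧ X₂ ω = xd.1) :=
  identification_general ppre ppost A₁ X₁ D₁ Y₁ Yd₁ A₂ X₂ D₂ Y₂ Yd₂ hpost0 hcons₁ hcons₂ hunc₁ hunc₂
    hNUD hCATE hNF a y
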